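/- For all lambda terms M and N, M*[x:=N*] β-reduces to (M[x:=N])*, and moreover the reduction can be done in at most |M*| − 1 steps. -/

import Mathlib

inductive Lam : Type
  | var : ℕ → Lam
  | lam : Lam → Lam
  | app : Lam → Lam → Lam
  deriving DecidableEq

namespace Lam

/-- term size -/
def size : Lam → ℕ
  | var _ => 1
  | lam M => 1 + M.size
  | app M N => 1 + M.size + N.size

/-- lift (shift) free variables ≥ d by 1 -/
def lift (d : ℕ) : Lam → Lam
  | var n => if n < d then var n else var (n+1)
  | lam M => lam (M.lift (d+1))
  | app M N => app (M.lift d) (N.lift d)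

/-- capture-avoiding substitution of N for the free variable x (de Bruijn) -/
def subst : Lam → ℕ → Lam → Lam
  | var n, x, N => if n = x then N else if x < n then var (n-1) else var n
  | lam M, x, N => lam (M.subst (x+1) (N.lift 0))
  | app M P, x, N => app (M.subst x N) (P.subst x N)

/-- number of free occurrences of the variable x -/
def count : Lam → ℕ → ℕ
  | var n, x => if n = x then 1 else 0
  | lam M, x => M.count (x+1)
  | app M N, x => M.count x + N.count x

/-- one-step β-reduction -/
inductive Step : Lam → Lam → Prop
  | beta (M N : Lam) : Step (app (lam M) N) (M.subst 0 N)
  | appL {M M' : Lam} (N : Lam) : Step M M' → Step (app M N) (app M' N)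
  | appR (M : Lam) {N N' : Lam} : Step N N' → Step (app M N) (app M N')
  | abs {M M' : Lam} : Step M M' → Step (lam M) (lam M')

/-- many-step β-reduction (reflexive-transitive closure) -/
def Red : Lam → Lam → Prop := Relation.ReflTransGen Step

/-- n-step β-reduction -/
def Steps : ℕ → Lam → Lam → Prop
  | 0, M, N => M = N
  | n+1, M, N => ∃ P, Step M P ∧ Steps n P N

/-- Takahashi translation (Gross-Knuth complete development) -/
def star : Lam → Lam
  | var n => var n
  | lam M => lam (star M)
  | app (lam M) N => (star M).subst 0 (star N)
  | app (var n) N => app (var n) (star N)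
  | app (app M₁ M₂) N => app (star (app M₁ M₂)) (star N)

/-- iterated Takahashi translation M^(n*) -/
def iterStar (n : ℕ) (M : Lam) : Lam := star^[n] M

/-!
Induction on `M` along the clauses of `star`. The only clause that costs more than the
inductive hypotheses is the redex `M = (λP) Q`, where `M* = P*[0:=Q*]`. By the substitution
lemma, `M*[x:=N*] = P*[x+1:=N*][0:=Q*[x:=N*]]`; reducing each of the `c = #₀ P*` copies of
`Q*[x:=N*]` and then `P*[x+1:=N*]` takes at most `c (|Q*| - 1) + |P*| - 1` steps, which is
`|P*[0:=Q*]| - 1` because substitution adds exactly `c (|Q*| - 1)` to the size. The other extra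
step is the β-step created when the head variable `x` of `x Q` is replaced by an abstraction,
and it is paid for by that head variable.
-/

lemma lift_var_of_lt {n d : ℕ} (h : n < d) : (var n).lift d = var n := by
  simp [lift, h]

lemma lift_var_of_le {n d : ℕ} (h : d ≤ n) : (var n).lift d = var (n + 1) := by
  simp [lift, Nat.not_lt.2 h]

lemma subst_var_self (x : ℕ) (N : Lam) : (var x).subst x N = N := by
  simp [subst]

lemma subst_var_of_lt {n x : ℕ} (h : n < x) (N : Lam) : (var n).subst x N = var n := by
  rw [subst, if_neg h.ne, if_neg (by omega)]

lemma subst_var_of_gt {n x : ℕ} (h : x < n) (N : Lam) : (var n).subst x N = var (n - 1) := by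
  rw [subst, if_neg h.ne', if_pos h]

@[simp] lemma subst_app (M P N : Lam) (x : ℕ) :
    (app M P).subst x N = app (M.subst x N) (P.subst x N) := rfl

lemma exists_subst_var_of_ne {n x : ℕ} (h : n ≠ x) : ∃ m, ∀ N, (var n).subst x N = var m := by
  rcases h.lt_or_gt with h | h
  · exact ⟨n, subst_var_of_lt h⟩
  · exact ⟨n - 1, subst_var_of_gt h⟩

lemma lift_lift_of_le (M : Lam) {d e : ℕ} (h : d ≤ e) :
    (M.lift d).lift (e + 1) = (M.lift e).lift d := by
  induction M generalizing d e with
  | var n =>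
    by_cases h1 : n < d
    · rw [lift_var_of_lt h1, lift_var_of_lt (by omega), lift_var_of_lt (by omega),
        lift_var_of_lt h1]
    · by_cases h2 : n < e
      · rw [lift_var_of_le (by omega), lift_var_of_lt (by omega), lift_var_of_lt h2,
          lift_var_of_le (by omega)]
      · rw [lift_var_of_le (by omega), lift_var_of_le (by omega), lift_var_of_le (by omega),
          lift_var_of_le (by omega)]
  | lam M ih => simp only [lift, ih (Nat.succ_le_succ h)]
  | app M P ihM ihP => simp only [lift, ihM h, ihP h]

lemma lift_subst_of_le (M N : Lam) {x d : ℕ} (h : x ≤ d) :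
    (M.subst x N).lift d = (M.lift (d + 1)).subst x (N.lift d) := by
  induction M generalizing N x d with
  | var n =>
    rcases Nat.lt_trichotomy n x with hn | rfl | hn
    · rw [subst_var_of_lt hn, lift_var_of_lt (by omega), lift_var_of_lt (by omega),
        subst_var_of_lt hn]
    · rw [subst_var_self, lift_var_of_lt (by omega), subst_var_self]
    · by_cases hnd : n ≤ d
      · rw [subst_var_of_gt hn, lift_var_of_lt (by omega), lift_var_of_lt (by omega),
          subst_var_of_gt hn]
      · rw [subst_var_of_gt hn, lift_var_of_le (by omega), lift_var_of_le (by omega),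
          subst_var_of_gt (by omega), Nat.sub_add_cancel (by omega), Nat.add_sub_cancel]
  | lam M ih =>
    simp only [subst, lift, ih _ (Nat.succ_le_succ h), lift_lift_of_le N (Nat.zero_le d)]
  | app M P ihM ihP => simp only [subst, lift, ihM N h, ihP N h]

lemma lift_subst_of_ge (M N : Lam) {x d : ℕ} (h : d ≤ x) :
    (M.subst x N).lift d = (M.lift d).subst (x + 1) (N.lift d) := by
  induction M generalizing N x d with
  | var n =>
    rcases Nat.lt_trichotomy n x with hn | rfl | hn
    · by_cases hnd : n < d
      · rw [subst_var_of_lt hn, lift_var_of_lt hnd, subst_var_of_lt (by omega)]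
      · rw [subst_var_of_lt hn, lift_var_of_le (by omega), subst_var_of_lt (by omega)]
    · rw [subst_var_self, lift_var_of_le h, subst_var_self]
    · rw [subst_var_of_gt hn, lift_var_of_le (by omega), lift_var_of_le (by omega),
        subst_var_of_gt (by omega), Nat.sub_add_cancel (by omega), Nat.add_sub_cancel]
  | lam M ih =>
    simp only [subst, lift, ih _ (Nat.succ_le_succ h), lift_lift_of_le N (Nat.zero_le d)]
  | app M P ihM ihP => simp only [subst, lift, ihM N h, ihP N h]

lemma subst_lift_self (M N : Lam) (x : ℕ) : (M.lift x).subst x N = M := by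
  induction M generalizing N x with
  | var n =>
    by_cases h : n < x
    · rw [lift_var_of_lt h, subst_var_of_lt h]
    · rw [lift_var_of_le (by omega), subst_var_of_gt (by omega), Nat.add_sub_cancel]
  | lam M ih => simp only [lift, subst, ih]
  | app M P ihM ihP => simp only [lift, subst, ihM, ihP]

theorem subst_subst_of_le (M Q N : Lam) {y x : ℕ} (h : y ≤ x) :
    (M.subst y Q).subst x N = (M.subst (x + 1) (N.lift y)).subst y (Q.subst x N) := by
  induction M generalizing Q N y x with
  | var n =>
    rcases Nat.lt_trichotomy n y with hny | rfl | hny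
    · rw [subst_var_of_lt hny, subst_var_of_lt (by omega), subst_var_of_lt (by omega),
        subst_var_of_lt hny]
    · rw [subst_var_self, subst_var_of_lt (by omega), subst_var_self]
    · rcases Nat.lt_trichotomy n (x + 1) with hnx | rfl | hnx
      · rw [subst_var_of_gt hny, subst_var_of_lt (by omega), subst_var_of_lt hnx,
          subst_var_of_gt hny]
      · rw [subst_var_of_gt hny, Nat.add_sub_cancel, subst_var_self, subst_var_self,
          subst_lift_self]
      · rw [subst_var_of_gt hny, subst_var_of_gt (by omega), subst_var_of_gt (by omega),
          subst_var_of_gt (by omega)]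
  | lam M ih =>
    simp only [subst, ih _ _ (Nat.succ_le_succ h), lift_lift_of_le N (Nat.zero_le y),
      lift_subst_of_ge Q N (Nat.zero_le x)]
  | app M P ihM ihP => simp only [subst, ihM Q N h, ihP Q N h]

lemma count_lift_succ (M : Lam) {d y : ℕ} (h : d ≤ y) : (M.lift d).count (y + 1) = M.count y := by
  induction M generalizing d y with
  | var n =>
    by_cases hn : n < d
    · simp only [lift_var_of_lt hn, count]
      split_ifs <;> omega
    · simp [lift_var_of_le (by omega : d ≤ n), count]
  | lam M ih => exact ih (Nat.succ_le_succ h)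
  | app M P ihM ihP => simp only [lift, count, ihM h, ihP h]

lemma count_lift_self (M : Lam) (y : ℕ) : (M.lift y).count y = 0 := by
  induction M generalizing y with
  | var n =>
    by_cases hn : n < y
    · simp only [lift_var_of_lt hn, count]
      split_ifs <;> omega
    · simp only [lift_var_of_le (by omega : y ≤ n), count]
      split_ifs <;> omega
  | lam M ih => exact ih (y + 1)
  | app M P ihM ihP => simp only [lift, count, ihM, ihP, Nat.add_zero]

lemma count_subst_of_lt (M : Lam) {N : Lam} {y x : ℕ} (h : y < x) (hN : N.count y = 0) :
    (M.subst x N).count y = M.count y := by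
  induction M generalizing N y x with
  | var n =>
    rcases Nat.lt_trichotomy n x with hn | rfl | hn
    · rw [subst_var_of_lt hn]
    · simp only [subst_var_self, hN, count]
      split_ifs <;> omega
    · simp only [subst_var_of_gt hn, count]
      split_ifs <;> omega
  | lam M ih => exact ih (Nat.succ_lt_succ h) (by rwa [count_lift_succ N (Nat.zero_le y)])
  | app M P ihM ihP => simp only [subst, count, ihM h hN, ihP h hN]

lemma size_lift (M : Lam) (d : ℕ) : (M.lift d).size = M.size := by
  induction M generalizing d with
  | var n => by_cases h : n < d <;> simp [lift, size, h]
  | lam M ih => simp only [lift, size, ih]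
  | app M P ihM ihP => simp only [lift, size, ihM, ihP]

/-- Each of the `M.count x` occurrences of `x` grows from size `1` to size `N.size`. -/
lemma size_subst_add_count (M N : Lam) (x : ℕ) :
    (M.subst x N).size + M.count x = M.size + M.count x * N.size := by
  induction M generalizing N x with
  | var n =>
    rcases Nat.lt_trichotomy n x with hn | rfl | hn
    · simp [subst_var_of_lt hn, count, size, hn.ne]
    · simp [subst_var_self, count, size, Nat.add_comm]
    · simp [subst_var_of_gt hn, count, size, hn.ne']
  | lam M ih =>
    have := ih (N.lift 0) (x + 1)
    simp only [subst, size, count, size_lift] at this ⊢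
    omega
  | app M P ihM ihP =>
    have hM := ihM N x
    have hP := ihP N x
    simp only [subst, size, count, Nat.add_mul]
    omega

lemma star_lift (M : Lam) (d : ℕ) : (M.lift d).star = M.star.lift d := by
  induction M using star.induct generalizing d with
  | case1 n => by_cases h : n < d <;> simp [lift, star, h]
  | case2 M ih => simp only [lift, star, ih]
  | case3 M N ihM ihN =>
    simp only [lift, star, ihM, ihN, lift_subst_of_le M.star N.star (Nat.zero_le d)]
  | case4 n N ih => by_cases h : n < d <;> simp [lift, star, h, ih]
  | case5 M₁ M₂ N ihM ihN =>
    simp only [lift] at ihM ⊢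
    simp only [star, ihM, ihN, lift]

lemma star_app_of_ne_lam {N : Lam} (hN : ∀ P, N ≠ lam P) (Q : Lam) :
    (app N Q).star = app N.star Q.star := by
  cases N with
  | var n => rfl
  | lam P => exact absurd rfl (hN P)
  | app N₁ N₂ => rfl

lemma Step.lift {A B : Lam} (h : Step A B) (d : ℕ) : Step (A.lift d) (B.lift d) := by
  induction h generalizing d with
  | beta P Q =>
    rw [lift_subst_of_le P Q (Nat.zero_le d)]
    exact .beta _ _
  | appL N _ ih => exact .appL _ (ih d)
  | appR M _ ih => exact .appR _ (ih d)
  | abs _ ih => exact .abs (ih (d + 1))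

lemma Step.subst {A B : Lam} (h : Step A B) (x : ℕ) (N : Lam) :
    Step (A.subst x N) (B.subst x N) := by
  induction h generalizing x N with
  | beta P Q =>
    rw [subst_subst_of_le P Q N (Nat.zero_le x)]
    exact .beta _ _
  | appL _ _ ih => exact .appL _ (ih x N)
  | appR _ _ ih => exact .appR _ (ih x N)
  | abs _ ih => exact .abs (ih (x + 1) (N.lift 0))

namespace Steps

lemma single {A B : Lam} (h : Step A B) : Steps 1 A B := ⟨B, h, rfl⟩

lemma trans {m n : ℕ} {A B C : Lam} (hAB : Steps m A B) (hBC : Steps n B C) :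
    Steps (m + n) A C := by
  induction m generalizing A with
  | zero => cases hAB; rwa [Nat.zero_add]
  | succ m ih =>
    obtain ⟨P, hAP, hPB⟩ := hAB
    rw [Nat.add_right_comm]
    exact ⟨P, hAP, ih hPB⟩

lemma toRed {m : ℕ} {A B : Lam} (h : Steps m A B) : Red A B := by
  induction m generalizing A with
  | zero => cases h; exact .refl
  | succ m ih =>
    obtain ⟨P, hAP, hPB⟩ := h
    exact .head hAP (ih hPB)

lemma map {m : ℕ} {A B : Lam} (f : Lam → Lam) (hf : ∀ {X Y}, Step X Y → Step (f X) (f Y))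
    (h : Steps m A B) : Steps m (f A) (f B) := by
  induction m generalizing A with
  | zero => cases h; rfl
  | succ m ih =>
    obtain ⟨P, hAP, hPB⟩ := h
    exact ⟨f P, hf hAP, ih hPB⟩

lemma abs {m : ℕ} {A A' : Lam} (h : Steps m A A') : Steps m (lam A) (lam A') :=
  h.map lam .abs

lemma appR {m : ℕ} (A : Lam) {B B' : Lam} (h : Steps m B B') :
    Steps m (app A B) (app A B') :=
  h.map (app A) (.appR A)

lemma app {m n : ℕ} {A A' B B' : Lam} (hA : Steps m A A') (hB : Steps n B B') :
    Steps (m + n) (app A B) (app A' B') :=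
  (hA.map (Lam.app · B) (.appL B)).trans (hB.appR A')

lemma lift {m : ℕ} {A A' : Lam} (h : Steps m A A') (d : ℕ) : Steps m (A.lift d) (A'.lift d) :=
  h.map (·.lift d) (·.lift d)

lemma subst_left {m : ℕ} {A A' : Lam} (h : Steps m A A') (x : ℕ) (N : Lam) :
    Steps m (A.subst x N) (A'.subst x N) :=
  h.map (·.subst x N) (·.subst x N)

lemma subst_right (A : Lam) {m : ℕ} {B B' : Lam} (x : ℕ) (h : Steps m B B') :
    Steps (A.count x * m) (A.subst x B) (A.subst x B') := by
  induction A generalizing B B' x with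
  | var n =>
    by_cases hn : n = x
    · subst hn
      simpa [count, subst_var_self] using h
    · obtain ⟨k, hk⟩ := exists_subst_var_of_ne hn
      simp only [count, if_neg hn, Nat.zero_mul, hk]
      rfl
  | lam A ih => exact (ih (x + 1) (h.lift 0)).abs
  | app A P ihA ihP =>
    simp only [subst, count, Nat.add_mul]
    exact (ihA x h).app (ihP x h)

end Steps

lemma exists_steps_star_subst_beta (P Q N : Lam) (x : ℕ)
    (hP : ∃ l < P.star.size,
      Steps l (P.star.subst (x + 1) (N.lift 0).star) ((P.subst (x + 1) (N.lift 0)).star))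
    (hQ : ∃ l < Q.star.size, Steps l (Q.star.subst x N.star) ((Q.subst x N).star)) :
    ∃ l < (app (lam P) Q).star.size,
      Steps l ((app (lam P) Q).star.subst x N.star) (((app (lam P) Q).subst x N).star) := by
  obtain ⟨lP, hlP, hP⟩ := hP
  obtain ⟨lQ, hlQ, hQ⟩ := hQ
  have hcount : (P.star.subst (x + 1) (N.lift 0).star).count 0 = P.star.count 0 :=
    count_subst_of_lt _ (Nat.succ_pos x) (by rw [star_lift]; exact count_lift_self _ 0)
  have hsize := size_subst_add_count P.star Q.star 0
  have hcQ : P.star.count 0 * (lQ + 1) ≤ P.star.count 0 * Q.star.size :=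
    Nat.mul_le_mul_left _ hlQ
  rw [Nat.mul_succ] at hcQ
  refine ⟨P.star.count 0 * lQ + lP, ?_, ?_⟩
  · simp only [star]
    omega
  · simp only [star, subst]
    rw [subst_subst_of_le P.star Q.star N.star (Nat.zero_le x), ← star_lift N 0]
    have hQ' := Steps.subst_right (P.star.subst (x + 1) (N.lift 0).star) 0 hQ
    rw [hcount] at hQ'
    exact hQ'.trans (hP.subst_left 0 _)

lemma exists_steps_star_subst (M N : Lam) (x : ℕ) :
    ∃ l < M.star.size, Steps l (M.star.subst x N.star) ((M.subst x N).star) := by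
  induction M using star.induct generalizing N x with
  | case1 n =>
    refine ⟨0, by simp [star, size], ?_⟩
    by_cases hn : n = x
    · subst hn
      simp only [star, subst_var_self]
      rfl
    · obtain ⟨k, hk⟩ := exists_subst_var_of_ne hn
      simp only [star, hk]
      rfl
  | case2 P ih =>
    obtain ⟨l, hl, h⟩ := ih (N.lift 0) (x + 1)
    rw [star_lift] at h
    exact ⟨l, by simp only [star, size]; omega, h.abs⟩
  | case3 P Q ihP ihQ => exact exists_steps_star_subst_beta P Q N x (ihP _ _) (ihQ N x)
  | case4 n Q ih =>
    obtain ⟨l, hl, h⟩ := ih N x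
    have hl' : l + 1 < (app (var n) Q).star.size := by simp only [star, size]; omega
    by_cases hn : n = x
    · subst hn
      by_cases hN : ∃ P, N = lam P
      · obtain ⟨P, rfl⟩ := hN
        refine ⟨l + 1, hl', ?_⟩
        simp only [star, subst_app, subst_var_self]
        exact (h.appR _).trans (.single (.beta _ _))
      · push Not at hN
        refine ⟨l, by omega, ?_⟩
        simp only [star, subst_app, subst_var_self, star_app_of_ne_lam hN]
        exact h.appR _
    · obtain ⟨k, hk⟩ := exists_subst_var_of_ne hn
      refine ⟨l, by omega, ?_⟩
      simp only [star, subst_app, hk]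
      exact h.appR _
  | case5 M₁ M₂ Q ihM ihQ =>
    obtain ⟨l₁, hl₁, h₁⟩ := ihM N x
    obtain ⟨l₂, hl₂, h₂⟩ := ihQ N x
    simp only [subst_app] at h₁
    refine ⟨l₁ + l₂, by simp only [star, size] at hl₁ ⊢; omega, ?_⟩
    simp only [star, subst_app]
    exact h₁.app h₂

end Lam

/-- M*[x:=N*] ↠ (M[x:=N])*, in at most |M*| − 1 steps -/
theorem star_subst (M N : Lam) (x : ℕ) :
    Lam.Red (M.star.subst x N.star) ((M.subst x N).star) ∧
      ∃ l : ℕ, Lam.Steps l (M.star.subst x N.star) ((M.subst x N).star) ∧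
        l ≤ M.star.size - 1 := by
  obtain ⟨l, hl, h⟩ := Lam.exists_steps_star_subst M N x
  exact ⟨h.toRed, l, h, by omega⟩
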